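/- Derivation of the Semenov-Tian-Shansky bracket: let A be a commutative ℝ-algebra with an ℝ-bilinear antisymmetric bracket satisfying the Leibniz rule in each argument, let λ ∈ ℝ, R₊, R₋ ∈ M_{n²}(ℝ), and let m, c, d ∈ M_n(A) with c invertible and m = c⁻¹d. If {m₁, c₂} = λ c₂ (m₁R₊ − R₋m₁) and {m₁, d₂} = λ d₂ (m₁R₊ − R₋m₁) in M_{n²}(A), then the monodromy m satisfies the Semenov-Tian-Shansky bracket {m₁, m₂} = λ (m₁m₂R₊ − m₂R₋m₁ − m₁R₊m₂ + R₋m₁m₂). -/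
import Mathlib


open Matrix Kronecker TensorProduct

noncomputable section

/-- An ℝ-bilinear antisymmetric bracket on a commutative ℝ-algebra `C` satisfying the
Leibniz rule in each argument (by antisymmetry, left ℝ-linearity and the Leibniz rule in
the second argument give the corresponding properties in the first argument). -/
structure PoissonBracketOn (C : Type*) [CommRing C] [Algebra ℝ C] where
  br : C → C → C
  add_left : ∀ x y z : C, br (x + y) z = br x z + br y z
  smul_left : ∀ (r : ℝ) (x y : C), br (r • x) y = r • br x y
  antisymm : ∀ x y : C, br x y = -br y x
  leibniz : ∀ x y z : C, br x (y * z) = br x y * z + y * br x z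

/-- The matrix of brackets `({M₁,N₂})_{(i,k),(j,l)} = {M_{ij}, N_{kl}}` in `M_{n²}(C)`. -/
def brMat {n : ℕ} {C : Type*} (br : C → C → C) (M N : Matrix (Fin n) (Fin n) C) :
    Matrix (Fin n × Fin n) (Fin n × Fin n) C :=
  Matrix.of fun p q => br (M p.1 q.1) (N p.2 q.2)

/-- The Kronecker embedding `M₁ = M ⊗ 1ₙ` of `M_n(C)` into `M_{n²}(C)`. -/
def emb1 {n : ℕ} {C : Type*} [CommRing C] (M : Matrix (Fin n) (Fin n) C) :
    Matrix (Fin n × Fin n) (Fin n × Fin n) C :=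
  M ⊗ₖ (1 : Matrix (Fin n) (Fin n) C)

/-- The Kronecker embedding `N₂ = 1ₙ ⊗ N` of `M_n(C)` into `M_{n²}(C)`. -/
def emb2 {n : ℕ} {C : Type*} [CommRing C] (N : Matrix (Fin n) (Fin n) C) :
    Matrix (Fin n × Fin n) (Fin n × Fin n) C :=
  (1 : Matrix (Fin n) (Fin n) C) ⊗ₖ N

/-- A constant matrix over `ℝ` regarded as a matrix over the ℝ-algebra `C`. -/
def constM {m : Type*} {C : Type*} [CommRing C] [Algebra ℝ C] (ρ : Matrix m m ℝ) :
    Matrix m m C :=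
  ρ.map (algebraMap ℝ C)

/-- The Sklyanin bracket relation `{g₁, g₂} = μ(g₁g₂ρ − ρg₁g₂)` with r-matrix `ρ` and
scaling `μ`. -/

def SklyaninRel {n : ℕ} {C : Type*} [CommRing C] [Algebra ℝ C] (br : C → C → C) (μ : ℝ)
    (ρ : Matrix (Fin n × Fin n) (Fin n × Fin n) ℝ) (g : Matrix (Fin n) (Fin n) C) : Prop :=
  brMat br g g = μ • (emb1 g * emb2 g * constM ρ - constM ρ * (emb1 g * emb2 g))

lemma PB.add_right {C : Type*} [CommRing C] [Algebra ℝ C] (PA : PoissonBracketOn C)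
    (x y z : C) : PA.br x (y + z) = PA.br x y + PA.br x z := by
  rw [PA.antisymm, PA.add_left, neg_add, ← PA.antisymm, ← PA.antisymm]

lemma PB.sum_right {C : Type*} [CommRing C] [Algebra ℝ C] (PA : PoissonBracketOn C)
    (x : C) {ι : Type*} (s : Finset ι) (f : ι → C) :
    PA.br x (∑ i ∈ s, f i) = ∑ i ∈ s, PA.br x (f i) :=
  map_sum (AddMonoidHom.mk' (PA.br x) (PB.add_right PA x)) f s

lemma brMat_mul_right {n : ℕ} {C : Type*} [CommRing C] [Algebra ℝ C]
    (PA : PoissonBracketOn C) (M N P : Matrix (Fin n) (Fin n) C) :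
    brMat PA.br M (N * P) = brMat PA.br M N * emb2 P + emb2 N * brMat PA.br M P := by
  ext ⟨i, k⟩ ⟨j, l⟩
  show PA.br (M i j) ((N * P) k l) = _
  rw [Matrix.mul_apply, PB.sum_right]
  simp only [PA.leibniz]
  rw [Finset.sum_add_distrib]
  simp [brMat, emb2, Matrix.mul_apply, Matrix.add_apply, Fintype.sum_prod_type,
    Matrix.one_apply, mul_comm]

lemma emb2_mul {n : ℕ} {C : Type*} [CommRing C] (N P : Matrix (Fin n) (Fin n) C) :
    emb2 (N * P) = emb2 N * emb2 P := by
  simp [emb2, ← Matrix.mul_kronecker_mul]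

lemma emb2_one {n : ℕ} {C : Type*} [CommRing C] :
    emb2 (1 : Matrix (Fin n) (Fin n) C) = 1 := Matrix.one_kronecker_one

lemma emb_comm {n : ℕ} {C : Type*} [CommRing C] (M N : Matrix (Fin n) (Fin n) C) :
    emb1 M * emb2 N = emb2 N * emb1 M := by
  simp [emb1, emb2, ← Matrix.mul_kronecker_mul]

lemma emb2_isUnit {n : ℕ} {C : Type*} [CommRing C] {c : Matrix (Fin n) (Fin n) C}
    (hc : IsUnit c) : IsUnit (emb2 c) := by
  obtain ⟨u, hu⟩ := hc
  exact ⟨⟨emb2 c, emb2 ↑u⁻¹,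
    by rw [← emb2_mul, ← hu, u.mul_inv, emb2_one],
    by rw [← emb2_mul, ← hu, u.inv_mul, emb2_one]⟩, rfl⟩

lemma stsb_aux {n : ℕ} {A : Type} [CommRing A] [Algebra ℝ A]
    (PA : PoissonBracketOn A) (lam : ℝ)
    (m c d : Matrix (Fin n) (Fin n) A) (hc : IsUnit c) (hm : m = c⁻¹ * d)
    (X : Matrix (Fin n × Fin n) (Fin n × Fin n) A)
    (hmc : brMat PA.br m c = lam • (emb2 c * X))
    (hmd : brMat PA.br m d = lam • (emb2 d * X)) :
    brMat PA.br m m = lam • (emb2 m * X - X * emb2 m) := by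
  have hdet : IsUnit c.det := (Matrix.isUnit_iff_isUnit_det c).mp hc
  have hd : d = c * m := by
    rw [hm, ← Matrix.mul_assoc, Matrix.mul_nonsing_inv c hdet, Matrix.one_mul]
  have key : emb2 c * brMat PA.br m m = emb2 c * (lam • (emb2 m * X - X * emb2 m)) := by
    have h := brMat_mul_right PA m c m
    rw [← hd, hmd, hmc, hd, emb2_mul, smul_mul_assoc] at h
    have h2 : emb2 c * brMat PA.br m m
        = lam • (emb2 c * emb2 m * X) - lam • (emb2 c * X * emb2 m) :=
      eq_sub_of_add_eq' h.symm
    rw [h2, mul_smul_comm, mul_sub, smul_sub, Matrix.mul_assoc, Matrix.mul_assoc]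
  exact (emb2_isUnit hc).mul_left_cancel key

/-- Derivation of the Semenov-Tian-Shansky bracket: if `m, c, d ∈ M_n(A)` with `c`
invertible, `m = c⁻¹d`, and `{m₁, c₂} = λ c₂ (m₁R₊ − R₋m₁)`,
`{m₁, d₂} = λ d₂ (m₁R₊ − R₋m₁)`, then the monodromy `m` satisfies the
Semenov-Tian-Shansky bracket
`{m₁, m₂} = λ (m₁m₂R₊ − m₂R₋m₁ − m₁R₊m₂ + R₋m₁m₂)`. -/
theorem semenov_tian_shansky_bracket {n : ℕ} {A : Type} [CommRing A] [Algebra ℝ A]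
    (PA : PoissonBracketOn A) (lam : ℝ)
    (Rp Rm : Matrix (Fin n × Fin n) (Fin n × Fin n) ℝ)
    (m c d : Matrix (Fin n) (Fin n) A) (hc : IsUnit c) (hm : m = c⁻¹ * d)
    (hmc : brMat PA.br m c =
      lam • (emb2 c * (emb1 m * constM Rp - constM Rm * emb1 m)))
    (hmd : brMat PA.br m d =
      lam • (emb2 d * (emb1 m * constM Rp - constM Rm * emb1 m))) :
    brMat PA.br m m =
      lam • (emb1 m * emb2 m * constM Rp - emb2 m * constM Rm * emb1 m -
        emb1 m * constM Rp * emb2 m + constM Rm * (emb1 m * emb2 m)) := by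
  have h := stsb_aux PA lam m c d hc hm (emb1 m * constM Rp - constM Rm * emb1 m) hmc hmd
  rw [h]
  congr 1
  rw [mul_sub, sub_mul, ← Matrix.mul_assoc (emb2 m) (emb1 m), ← emb_comm,
    ← Matrix.mul_assoc (emb2 m) (constM Rm), Matrix.mul_assoc (constM Rm)]
  abel
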